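/- arXiv:1911.06619 — 5 statements merged into one kernel-verified Lean document; each statement's English description precedes it below -/
import Mathlib

section
/- Let Ω ⊆ ℝ² be open, u : Ω → ℝ continuous and monotone, and let A, V be open subsets of Ω with cl(V) ∩ Ω ⊆ A. If the restriction of u to Ω \ cl(V) is monotone and the restriction of u to A is strictly monotone, then u is monotone in Ω. -/
open Set Metric

/-- Lebesgue monotonicity on an open set. -/
def LebMonotoneOn {E : Type*} [TopologicalSpace E] (Ω : Set E) (f : E → ℝ) : Prop :=
  ∀ U : Set E, IsOpen U → U.Nonempty → IsCompact (closure U) → closure U ⊆ Ω →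
    (∃ x ∈ frontier U, ∀ y ∈ closure U, f y ≤ f x) ∧
    (∃ x ∈ frontier U, ∀ y ∈ closure U, f x ≤ f y)

/-- Strict Lebesgue monotonicity: monotone, and the max and min over `closure U` are
never attained at a point of `U`. -/
def StrictLebMonotoneOn {E : Type*} [TopologicalSpace E] (Ω : Set E) (f : E → ℝ) : Prop :=
  LebMonotoneOn Ω f ∧
  ∀ U : Set E, IsOpen U → U.Nonempty → IsCompact (closure U) → closure U ⊆ Ω →
    ∀ x ∈ U, (∃ y ∈ closure U, f x < f y) ∧ (∃ y ∈ closure U, f y < f x)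

lemma glue_max_aux (Ω A V : Set (EuclideanSpace ℝ (Fin 2)))
    (hΩ : IsOpen Ω) (hA : IsOpen A)
    (hcl : closure V ∩ Ω ⊆ A)
    (u : EuclideanSpace ℝ (Fin 2) → ℝ) (hu : ContinuousOn u Ω)
    (h₁ : ∀ U : Set (EuclideanSpace ℝ (Fin 2)), IsOpen U → U.Nonempty →
      IsCompact (closure U) → closure U ⊆ Ω \ closure V →
      ∃ x ∈ frontier U, ∀ y ∈ closure U, u y ≤ u x)
    (h₂ : ∀ U : Set (EuclideanSpace ℝ (Fin 2)), IsOpen U → U.Nonempty →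
      IsCompact (closure U) → closure U ⊆ A →
      ∀ x ∈ U, ∃ y ∈ closure U, u x < u y) :
    ∀ U : Set (EuclideanSpace ℝ (Fin 2)), IsOpen U → U.Nonempty →
      IsCompact (closure U) → closure U ⊆ Ω →
      ∃ x ∈ frontier U, ∀ y ∈ closure U, u y ≤ u x := by
  intro U hU hUne hUc hUΩ
  obtain ⟨x₀, hx₀, hmax⟩ := hUc.exists_isMaxOn hUne.closure (hu.mono hUΩ)
  by_contra hcon
  push_neg at hcon
  -- The max set K
  set K : Set (EuclideanSpace ℝ (Fin 2)) := closure U ∩ u ⁻¹' {u x₀} with hKdef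
  have hKsub : K ⊆ U := by
    intro x ⟨hx1, hx2⟩
    by_contra hxU
    have hxf : x ∈ frontier U := by
      rw [hU.frontier_eq]; exact ⟨hx1, hxU⟩
    obtain ⟨y, hy, hlt⟩ := hcon x hxf
    have : u y ≤ u x₀ := hmax hy
    simp only [mem_preimage, mem_singleton_iff] at hx2
    rw [hx2] at hlt
    exact absurd this (not_le.mpr hlt)
  by_cases hKV : (K ∩ closure V).Nonempty
  · -- max point in closure V, hence in A: use strict monotonicity
    obtain ⟨x, hxK, hxV⟩ := hKV
    have hxΩ : x ∈ Ω := hUΩ hxK.1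
    have hxA : x ∈ A := hcl ⟨hxV, hxΩ⟩
    have hxUA : x ∈ U ∩ A := ⟨hKsub hxK, hxA⟩
    obtain ⟨ε, hε, hball⟩ := Metric.isOpen_iff.mp (hU.inter hA) x hxUA
    have hε2 : (0:ℝ) < ε / 2 := by linarith
    have hcb : closedBall x (ε/2) ⊆ U ∩ A := (closedBall_subset_ball (by linarith)).trans hball
    have hclb : closure (ball x (ε/2)) ⊆ U ∩ A :=
      closure_ball_subset_closedBall.trans hcb
    obtain ⟨y, hy, hlt⟩ := h₂ (ball x (ε/2)) isOpen_ball ⟨x, mem_ball_self hε2⟩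
      ((isCompact_closedBall x (ε/2)).of_isClosed_subset isClosed_closure
        closure_ball_subset_closedBall)
      (hclb.trans inter_subset_right) x (mem_ball_self hε2)
    have hyU : y ∈ closure U := subset_closure (hclb hy).1
    have : u y ≤ u x₀ := hmax hyU
    have hx2 : u x = u x₀ := hxK.2
    rw [hx2] at hlt
    exact absurd this (not_le.mpr hlt)
  · -- max set away from closure V: use monotonicity on Ω \ closure V
    have hKG : K ⊆ U \ closure V := by
      intro x hx
      refine ⟨hKsub hx, fun hxV => hKV ⟨x, hx, hxV⟩⟩
    have hKc : IsCompact K :=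
      hUc.of_isClosed_subset
        (hu.mono hUΩ |>.preimage_isClosed_of_isClosed isClosed_closure isClosed_singleton)
        inter_subset_left
    have hG : IsOpen (U \ closure V) := hU.sdiff isClosed_closure
    obtain ⟨L, hL, hKL, hLG⟩ := exists_compact_between hKc hG hKG
    have hx₀K : x₀ ∈ K := ⟨hx₀, rfl⟩
    have hclL : closure (interior L) ⊆ L := closure_minimal interior_subset hL.isClosed
    obtain ⟨x, hxf, hxmax⟩ := h₁ (interior L) isOpen_interior ⟨x₀, hKL hx₀K⟩
      (hL.of_isClosed_subset isClosed_closure hclL)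
      (by
        refine hclL.trans (hLG.trans ?_)
        intro z ⟨hz1, hz2⟩
        exact ⟨hUΩ (subset_closure hz1), hz2⟩)
    have hxL : x ∈ closure (interior L) := frontier_subset_closure hxf
    have hxU : x ∈ closure U := subset_closure (hLG (hclL hxL)).1
    have h1 : u x₀ ≤ u x := hxmax x₀ (subset_closure (hKL hx₀K))
    have h2 : u x ≤ u x₀ := hmax hxU
    have hxK : x ∈ K := ⟨hxU, le_antisymm h2 h1⟩
    have : x ∉ interior L := by
      have := hxf.2
      rwa [interior_interior] at this
    exact this (hKL hxK)

/-- Gluing Lemma: if `u` is monotone on `Ω \ closure V` and strictly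
monotone on `A`, where `closure V ∩ Ω ⊆ A`, then `u` is monotone on `Ω`. -/
theorem lebMonotoneOn_glue (Ω A V : Set (EuclideanSpace ℝ (Fin 2)))
    (hΩ : IsOpen Ω) (hA : IsOpen A) (hV : IsOpen V) (hAΩ : A ⊆ Ω) (hVΩ : V ⊆ Ω)
    (hcl : closure V ∩ Ω ⊆ A)
    (u : EuclideanSpace ℝ (Fin 2) → ℝ) (hu : ContinuousOn u Ω)
    (h₁ : LebMonotoneOn (Ω \ closure V) u)
    (h₂ : StrictLebMonotoneOn A u) :
    LebMonotoneOn Ω u := by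
  intro U hU hUne hUc hUΩ
  constructor
  · exact glue_max_aux Ω A V hΩ hA hcl u hu
      (fun W hW hWne hWc hWs => (h₁ W hW hWne hWc hWs).1)
      (fun W hW hWne hWc hWs x hx => (h₂.2 W hW hWne hWc hWs x hx).1)
      U hU hUne hUc hUΩ
  · obtain ⟨x, hxf, hxm⟩ := glue_max_aux Ω A V hΩ hA hcl (fun z => -(u z)) hu.neg
      (fun W hW hWne hWc hWs => by
        obtain ⟨x, hxf, hxm⟩ := (h₁ W hW hWne hWc hWs).2
        exact ⟨x, hxf, fun y hy => neg_le_neg (hxm y hy)⟩)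
      (fun W hW hWne hWc hWs x hx => by
        obtain ⟨y, hy, hlt⟩ := (h₂.2 W hW hWne hWc hWs x hx).2
        exact ⟨y, hy, neg_lt_neg hlt⟩)
      U hU hUne hUc hUΩ
    exact ⟨x, hxf, fun y hy => by have := hxm y hy; simpa using this⟩
end

section
/- Let Ω ⊆ ℝ² be open, let J be a connected closed subset of Ω that exits all compact subsets of Ω (i.e., every component of J meets the complement of every compact subset of Ω), and let u : Ω → ℝ be continuous. If u is monotone on Ω \ J and u is constant on J, then u is monotone in Ω. -/
open Set Metric

/-- Auxiliary: the maximum-principle half of the statement. -/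
lemma aux_max_of_constant_on_escaping_set
    (Ω J : Set (EuclideanSpace ℝ (Fin 2))) (hΩ : IsOpen Ω)
    (hJconn : IsConnected J)
    (hJexits : ∀ K : Set (EuclideanSpace ℝ (Fin 2)), IsCompact K → K ⊆ Ω → ¬ J ⊆ K)
    (u : EuclideanSpace ℝ (Fin 2) → ℝ) (hu : ContinuousOn u Ω)
    (hmono : ∀ U : Set (EuclideanSpace ℝ (Fin 2)), IsOpen U → U.Nonempty →
      IsCompact (closure U) → closure U ⊆ Ω \ J →
      ∃ x ∈ frontier U, ∀ y ∈ closure U, u y ≤ u x)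
    (t : ℝ) (hconst : ∀ x ∈ J, u x = t)
    (U : Set (EuclideanSpace ℝ (Fin 2))) (hUopen : IsOpen U) (hUne : U.Nonempty)
    (hUcomp : IsCompact (closure U)) (hUΩ : closure U ⊆ Ω) :
    ∃ x ∈ frontier U, ∀ y ∈ closure U, u y ≤ u x := by
  have hcup : closure U = U ∪ frontier U := by
    rw [closure_eq_self_union_frontier]
  -- frontier U is nonempty
  have hfrne : (frontier U).Nonempty := by
    by_contra h
    rw [not_nonempty_iff_eq_empty] at h
    have hclopen : IsClopen U := ⟨by
      have : closure U = U := by rw [hcup, h, union_empty]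
      rw [← this]; exact isClosed_closure, hUopen⟩
    rcases isClopen_iff.mp hclopen with h1 | h1
    · exact hUne.ne_empty h1
    · have : IsCompact (univ : Set (EuclideanSpace ℝ (Fin 2))) := by
        have : closure U = univ := by rw [h1, closure_univ]
        rwa [this] at hUcomp
      exact NoncompactSpace.noncompact_univ this
  have hfrcl : frontier U ⊆ closure U := frontier_subset_closure
  have hfrcomp : IsCompact (frontier U) :=
    hUcomp.of_isClosed_subset isClosed_frontier hfrcl
  obtain ⟨xM, hxMcl, hxMmax⟩ :=
    hUcomp.exists_isMaxOn (hUne.mono subset_closure) (hu.mono hUΩ)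
  obtain ⟨xm, hxmfr, hxmmax⟩ :=
    hfrcomp.exists_isMaxOn hfrne ((hu.mono hUΩ).mono hfrcl)
  by_cases hMm : u xM ≤ u xm
  · exact ⟨xm, hxmfr, fun y hy => le_trans (hxMmax hy) hMm⟩
  push_neg at hMm
  -- choose a good level c
  obtain ⟨c, hcm, hcM, hcsafe⟩ :
      ∃ c, u xm < c ∧ c < u xM ∧ ∀ j ∈ J, j ∈ closure U → c ≤ u j → False := by
    rcases lt_trichotomy t (u xM) with ht | ht | ht
    · obtain ⟨c, hc1, hc2⟩ := exists_between (max_lt hMm ht)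
      exact ⟨c, lt_of_le_of_lt (le_max_left _ _) hc1,
        hc2, fun j hj hjcl hjc =>
          absurd (hconst j hj ▸ hjc) (not_le.mpr (lt_of_le_of_lt (le_max_right _ _) hc1))⟩
    · -- t = u xM : show J misses closure U
      have hJfr : ∀ j ∈ J, j ∉ frontier U := by
        intro j hj hjfr
        have : u j ≤ u xm := hxmmax hjfr
        rw [hconst j hj, ht] at this
        exact absurd this (not_le.mpr hMm)
      have hJcl : ∀ j ∈ J, j ∉ closure U := by
        intro j hj hjcl
        obtain ⟨j', hj'J, hj'ncl⟩ := not_subset.mp (hJexits (closure U) hUcomp hUΩ)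
        have hjU : j ∈ U := by
          rw [hcup] at hjcl
          rcases hjcl with h | h
          · exact h
          · exact absurd h (hJfr j hj)
        have hcov : J ⊆ U ∪ (closure U)ᶜ := by
          intro x hx
          by_cases hxc : x ∈ closure U
          · left
            rw [hcup] at hxc
            rcases hxc with h | h
            · exact h
            · exact absurd h (hJfr x hx)
          · exact Or.inr hxc
        obtain ⟨z, _, hz1, hz2⟩ := hJconn.isPreconnected U (closure U)ᶜ hUopen
          isClosed_closure.isOpen_compl hcov ⟨j, hj, hjU⟩ ⟨j', hj'J, hj'ncl⟩
        exact hz2 (subset_closure hz1)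
      obtain ⟨c, hc1, hc2⟩ := exists_between hMm
      exact ⟨c, hc1, hc2, fun j hj hjcl _ => hJcl j hj hjcl⟩
    · obtain ⟨c, hc1, hc2⟩ := exists_between hMm
      refine ⟨c, hc1, hc2, fun j hj hjcl hjc => ?_⟩
      have : u j ≤ u xM := hxMmax hjcl
      rw [hconst j hj] at this
      exact absurd (lt_of_le_of_lt this ht) (lt_irrefl _)
  -- the level set
  set W : Set (EuclideanSpace ℝ (Fin 2)) := U ∩ u ⁻¹' Ioi c with hW
  have hWopen : IsOpen W :=
    (hu.mono (subset_trans subset_closure hUΩ)).isOpen_inter_preimage hUopen isOpen_Ioi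
  have hxMU : xM ∈ U := by
    rw [hcup] at hxMcl
    rcases hxMcl with h | h
    · exact h
    · exact absurd (lt_trans (lt_of_le_of_lt (hxmmax h) hcm) hcM) (lt_irrefl _)
  have hxMW : xM ∈ W := ⟨hxMU, hcM⟩
  have hWsubU : W ⊆ U := inter_subset_left
  have hclWsub : closure W ⊆ closure U := closure_mono hWsubU
  have hWcomp : IsCompact (closure W) :=
    hUcomp.of_isClosed_subset isClosed_closure hclWsub
  -- points of closure W have u ≥ c
  have hclWc : closure W ⊆ closure U ∩ u ⁻¹' Ici c := by
    apply closure_minimal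
    · exact fun x hx => ⟨subset_closure (hWsubU hx), show c ≤ u x from le_of_lt hx.2⟩
    · exact (hu.mono hUΩ).preimage_isClosed_of_isClosed isClosed_closure isClosed_Ici
  have hclWΩJ : closure W ⊆ Ω \ J := by
    intro x hx
    refine ⟨hUΩ (hclWsub hx), fun hxJ => ?_⟩
    exact hcsafe x hxJ (hclWsub hx) (hclWc hx).2
  obtain ⟨x, hxfr, hxmax'⟩ := hmono W hWopen ⟨xM, hxMW⟩ hWcomp hclWΩJ
  -- frontier point of W has u ≤ c
  have hxc : u x ≤ c := by
    have hxclW : x ∈ closure W := frontier_subset_closure hxfr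
    have hxnW : x ∉ W := fun hxW => (hWopen.frontier_eq ▸ hxfr).2 hxW
    have hxclU : x ∈ closure U := hclWsub hxclW
    rw [hcup] at hxclU
    rcases hxclU with h | h
    · by_contra hc
      exact hxnW ⟨h, show c < u x from not_le.mp hc⟩
    · exact le_of_lt (lt_of_le_of_lt (hxmmax h) hcm)
  have : u xM ≤ u x := hxmax' xM (subset_closure hxMW)
  linarith

/-- if `J ⊆ Ω` is connected, closed in `Ω`, and exits every compact
subset of `Ω`, `u` is continuous on `Ω`, monotone on `Ω \ J`, and constant on `J`,
then `u` is monotone on `Ω`. -/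
theorem lebMonotoneOn_of_constant_on_escaping_set
    (Ω J : Set (EuclideanSpace ℝ (Fin 2))) (hΩ : IsOpen Ω) (hJΩ : J ⊆ Ω)
    (hJconn : IsConnected J) (hJclosed : Ω ∩ closure J ⊆ J)
    (hJexits : ∀ K : Set (EuclideanSpace ℝ (Fin 2)), IsCompact K → K ⊆ Ω → ¬ J ⊆ K)
    (u : EuclideanSpace ℝ (Fin 2) → ℝ) (hu : ContinuousOn u Ω)
    (hmono : LebMonotoneOn (Ω \ J) u)
    (t : ℝ) (hconst : ∀ x ∈ J, u x = t) :
    LebMonotoneOn Ω u := by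
  intro U hUopen hUne hUcomp hUΩ
  constructor
  · exact aux_max_of_constant_on_escaping_set Ω J hΩ hJconn hJexits u hu
      (fun V h1 h2 h3 h4 => (hmono V h1 h2 h3 h4).1) t hconst U hUopen hUne hUcomp hUΩ
  · have := aux_max_of_constant_on_escaping_set Ω J hΩ hJconn hJexits (fun x => -u x)
      (hu.neg)
      (fun V h1 h2 h3 h4 => by
        obtain ⟨x, hx1, hx2⟩ := (hmono V h1 h2 h3 h4).2
        exact ⟨x, hx1, fun y hy => neg_le_neg (hx2 y hy)⟩)
      (-t) (fun x hx => by simp [hconst x hx]) U hUopen hUne hUcomp hUΩ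
    obtain ⟨x, hx1, hx2⟩ := this
    exact ⟨x, hx1, fun y hy => by have := hx2 y hy; simpa using this⟩
end

section
/- Let Ω ⊆ ℝ² be open, u : Ω → ℝ continuous and monotone, and t₁ < t₂ real numbers. Let Υ = u⁻¹((t₁,t₂)) and let v : Υ → ℝ be continuous, monotone in Υ, extending continuously to ∂Υ ∩ Ω where it agrees with u, and satisfying t₁ ≤ v ≤ t₂ on Υ. Then the function ũ equal to u on Ω \ Υ and to v on Υ is continuous and monotone in Ω. -/
open Set Metric
open scoped Classical

lemma glue_cont (Ω : Set (EuclideanSpace ℝ (Fin 2))) (hΩ : IsOpen Ω)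
    (u v : EuclideanSpace ℝ (Fin 2) → ℝ) (hu : ContinuousOn u Ω)
    (t₁ t₂ : ℝ)
    (Υ : Set (EuclideanSpace ℝ (Fin 2))) (hΥ : Υ = {x ∈ Ω | u x ∈ Set.Ioo t₁ t₂})
    (hvext : ContinuousOn (fun x => if x ∈ Υ then v x else u x) (Υ ∪ (frontier Υ ∩ Ω))) :
    ContinuousOn (fun x => if x ∈ Υ then v x else u x) Ω := by
  set g := fun x => if x ∈ Υ then v x else u x with hg
  have hΥo : IsOpen Υ := by
    rw [hΥ]
    exact hu.isOpen_inter_preimage hΩ isOpen_Ioo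
  intro x hx
  by_cases hxΥ : x ∈ Υ
  · have h1 : ContinuousOn g Υ := hvext.mono subset_union_left
    exact (h1.continuousAt (hΥo.mem_nhds hxΥ)).continuousWithinAt
  · by_cases hxc : x ∈ closure Υ
    · have hxf : x ∈ frontier Υ ∩ Ω := ⟨⟨hxc, by rwa [hΥo.interior_eq]⟩, hx⟩
      have hA : ContinuousWithinAt g Υ x :=
        (hvext.continuousWithinAt (Or.inr hxf)).mono subset_union_left
      have hB : ContinuousWithinAt g (Ω \ Υ) x := by
        have hu' : ContinuousWithinAt u (Ω \ Υ) x := (hu x hx).mono diff_subset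
        exact hu'.congr (fun y hy => if_neg hy.2) (if_neg hxΥ)
      exact (hA.union hB).mono (fun y hy => by
        by_cases h : y ∈ Υ
        · exact Or.inl h
        · exact Or.inr ⟨hy, h⟩)
    · have hu' : ContinuousWithinAt u Ω x := hu x hx
      refine hu'.congr_of_eventuallyEq ?_ (if_neg hxΥ)
      have hmem : (closure Υ)ᶜ ∈ nhdsWithin x Ω :=
        nhdsWithin_le_nhds (isClosed_closure.isOpen_compl.mem_nhds hxc)
      filter_upwards [hmem] with y hy
      exact if_neg (fun h => hy (subset_closure h))

lemma glue_max (Ω : Set (EuclideanSpace ℝ (Fin 2))) (hΩ : IsOpen Ω)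
    (u v : EuclideanSpace ℝ (Fin 2) → ℝ)
    (hu : ContinuousOn u Ω) (humono : LebMonotoneOn Ω u)
    (t₁ t₂ : ℝ) (ht : t₁ < t₂)
    (Υ : Set (EuclideanSpace ℝ (Fin 2))) (hΥ : Υ = {x ∈ Ω | u x ∈ Set.Ioo t₁ t₂})
    (hvmono : LebMonotoneOn Υ v)
    (hvext : ContinuousOn (fun x => if x ∈ Υ then v x else u x) (Υ ∪ (frontier Υ ∩ Ω)))
    (hvbd : ∀ x ∈ Υ, t₁ ≤ v x ∧ v x ≤ t₂)
    (U : Set (EuclideanSpace ℝ (Fin 2))) (hUo : IsOpen U) (hUne : U.Nonempty)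
    (hUc : IsCompact (closure U)) (hUΩ : closure U ⊆ Ω) :
    ∃ x ∈ frontier U, ∀ y ∈ closure U,
      (if y ∈ Υ then v y else u y) ≤ (if x ∈ Υ then v x else u x) := by
  set g := fun x => if x ∈ Υ then v x else u x with hg
  have hΥo : IsOpen Υ := by
    rw [hΥ]
    exact hu.isOpen_inter_preimage hΩ isOpen_Ioo
  have hΥΩ : Υ ⊆ Ω := by rw [hΥ]; exact fun x hx => hx.1
  have hgc : ContinuousOn g Ω := glue_cont Ω hΩ u v hu t₁ t₂ Υ hΥ hvext
  have hgΥ : ∀ x ∈ Υ, g x = v x := fun x hx => if_pos hx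
  have hgΥ' : ∀ x, x ∉ Υ → g x = u x := fun x hx => if_neg hx
  have hnotIoo : ∀ x ∈ Ω, x ∉ Υ → u x ∉ Set.Ioo t₁ t₂ := by
    intro x hxΩ hxΥ hmem
    exact hxΥ (by rw [hΥ]; exact ⟨hxΩ, hmem⟩)
  -- frontier U nonempty
  have hFne : (frontier U).Nonempty := by
    rcases eq_empty_or_nonempty (frontier U) with h | h
    · exfalso
      have hcl : IsClosed U := by
        rw [← closure_subset_iff_isClosed]
        intro y hy
        by_contra hyU
        have : y ∈ frontier U := by rw [hUo.frontier_eq]; exact ⟨hy, hyU⟩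
        rw [h] at this; exact this
      rcases isClopen_iff.mp ⟨hcl, hUo⟩ with h' | h'
      · exact hUne.ne_empty h'
      · rw [h'] at hUc
        rw [closure_univ] at hUc
        exact NoncompactSpace.noncompact_univ hUc
    · exact h
  have hFc : IsCompact (frontier U) :=
    hUc.of_isClosed_subset isClosed_frontier frontier_subset_closure
  have hFΩ : frontier U ⊆ Ω := fun x hx => hUΩ (frontier_subset_closure hx)
  -- maximizers
  obtain ⟨x₀, hx₀cl, hx₀max⟩ := hUc.exists_isMaxOn (hUne.closure) (hgc.mono hUΩ)
  obtain ⟨zm, hzmF, hzmmax⟩ := hFc.exists_isMaxOn hFne (hgc.mono hFΩ)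
  refine ⟨zm, hzmF, fun y hy => ?_⟩
  have hymax : g y ≤ g x₀ := hx₀max hy
  suffices h : g x₀ ≤ g zm by linarith
  by_contra hlt
  push_neg at hlt   -- hlt : g zm < g x₀
  have hx₀U : x₀ ∈ U := by
    by_contra h
    have : x₀ ∈ frontier U := by rw [hUo.frontier_eq]; exact ⟨hx₀cl, h⟩
    exact absurd (hzmmax this) (not_le.mpr hlt)
  -- key argument (A)
  have keyA : ∀ z' ∈ closure U, z' ∉ Υ → t₂ ≤ u z' → g x₀ ≤ u z' → False := by
    intro z' hz'cl hz'Υ ht₂z hMz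
    obtain ⟨w, hwF, hwmax⟩ := (humono U hUo hUne hUc hUΩ).1
    have huw : u z' ≤ u w := hwmax z' hz'cl
    have hwΥ : w ∉ Υ := by
      intro hwΥ
      have : u w ∈ Set.Ioo t₁ t₂ := by rw [hΥ] at hwΥ; exact hwΥ.2
      linarith [this.2]
    have : g w = u w := hgΥ' w hwΥ
    have : g w ≤ g zm := hzmmax hwF
    have hgw : g w = u w := hgΥ' w hwΥ
    linarith
  rcases le_or_gt (g x₀) t₁ with hMt₁ | ht₁M
  · -- Case B : M ≤ t₁
    by_cases hUΥ : (closure U ∩ Υ).Nonempty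
    · obtain ⟨w, hwcl, hwΥ⟩ := hUΥ
      have hwt₁ : t₁ < u w := by rw [hΥ] at hwΥ; exact hwΥ.2.1
      obtain ⟨p, hpF, hpmax⟩ := (humono U hUo hUne hUc hUΩ).1
      have hup : u w ≤ u p := hpmax w hwcl
      by_cases hpΥ : p ∈ Υ
      · have h1 : t₁ ≤ v p := (hvbd p hpΥ).1
        have h2 : g p = v p := hgΥ p hpΥ
        have h3 : g p ≤ g zm := hzmmax hpF
        linarith
      · have hpΩ : p ∈ Ω := hFΩ hpF
        have h4 : u p ∉ Set.Ioo t₁ t₂ := hnotIoo p hpΩ hpΥ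
        have h5 : t₂ ≤ u p := by
          by_contra h
          exact h4 ⟨by linarith, by linarith⟩
        have h2 : g p = u p := hgΥ' p hpΥ
        have h3 : g p ≤ g zm := hzmmax hpF
        linarith
    · -- closure U ∩ Υ = ∅
      obtain ⟨p, hpF, hpmax⟩ := (humono U hUo hUne hUc hUΩ).1
      have hpΥ : p ∉ Υ := fun h => hUΥ ⟨p, frontier_subset_closure hpF, h⟩
      have hx₀Υ : x₀ ∉ Υ := fun h => hUΥ ⟨x₀, hx₀cl, h⟩
      have h1 : g x₀ = u x₀ := hgΥ' x₀ hx₀Υ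
      have h2 : g p = u p := hgΥ' p hpΥ
      have h3 : g p ≤ g zm := hzmmax hpF
      have h4 : u x₀ ≤ u p := hpmax x₀ hx₀cl
      linarith
  · -- Case : t₁ < M
    by_cases hx₀Υ : x₀ ∈ Υ
    · -- Case C
      have hvx₀ : g x₀ = v x₀ := hgΥ x₀ hx₀Υ
      have hMt₂ : g x₀ ≤ t₂ := by rw [hvx₀]; exact (hvbd x₀ hx₀Υ).2
      set c := (max t₁ (g zm) + g x₀) / 2 with hc
      have hmax_lt : max t₁ (g zm) < g x₀ := max_lt ht₁M hlt
      have hc₁ : t₁ < c := by have := le_max_left t₁ (g zm); simp only [hc]; linarith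
      have hc₂ : g zm < c := by have := le_max_right t₁ (g zm); simp only [hc]; linarith
      have hc₃ : c < g x₀ := by simp only [hc]; linarith
      set W := U ∩ Υ ∩ (Ω ∩ g ⁻¹' Set.Ioi c) with hW
      have hWo : IsOpen W :=
        ((hUo.inter hΥo).inter (hgc.isOpen_inter_preimage hΩ isOpen_Ioi))
      have hx₀W : x₀ ∈ W := ⟨⟨hx₀U, hx₀Υ⟩, hΥΩ hx₀Υ, by simp [mem_preimage, hc₃]⟩
      have hWU : W ⊆ U := fun x hx => hx.1.1
      have hWcl : closure W ⊆ closure U := closure_mono hWU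
      have hWc : IsCompact (closure W) :=
        hUc.of_isClosed_subset isClosed_closure hWcl
      by_cases hWΥ : closure W ⊆ Υ
      · obtain ⟨q, hqF, hqmax⟩ := (hvmono W hWo ⟨x₀, hx₀W⟩ hWc hWΥ).1
        have hqΥ : q ∈ Υ := hWΥ (frontier_subset_closure hqF)
        have hvq : v x₀ ≤ v q := hqmax x₀ (subset_closure hx₀W)
        have hgq : g q = v q := hgΥ q hqΥ
        have hqW : q ∉ W := fun h => (hWo.frontier_eq ▸ hqF).2 h
        have hqU : q ∉ U := by
          intro hqU
          exact hqW ⟨⟨hqU, hqΥ⟩, hΥΩ hqΥ, by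
            simp only [mem_preimage, mem_Ioi]
            rw [hgq]; linarith⟩
        have hqFU : q ∈ frontier U := by
          rw [hUo.frontier_eq]
          exact ⟨hWcl (frontier_subset_closure hqF), hqU⟩
        have : g q ≤ g zm := hzmmax hqFU
        linarith
      · -- C2: closure W meets Υᶜ
        rw [not_subset] at hWΥ
        obtain ⟨z', hz'cl, hz'Υ⟩ := hWΥ
        have hz'U : z' ∈ closure U := hWcl hz'cl
        have hz'Ω : z' ∈ Ω := hUΩ hz'U
        have hgz'cont : ContinuousWithinAt g W z' :=
          (hgc.continuousAt (hΩ.mem_nhds hz'Ω)).continuousWithinAt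
        haveI : (nhdsWithin z' W).NeBot := mem_closure_iff_nhdsWithin_neBot.mp hz'cl
        have hcle : c ≤ g z' := by
          refine ge_of_tendsto hgz'cont ?_
          filter_upwards [self_mem_nhdsWithin] with y hy
          exact le_of_lt hy.2.2
        have hgz' : g z' = u z' := hgΥ' z' hz'Υ
        have h4 : u z' ∉ Set.Ioo t₁ t₂ := hnotIoo z' hz'Ω hz'Υ
        have h5 : t₂ ≤ u z' := by
          by_contra h
          push_neg at h
          exact h4 ⟨by linarith, h⟩
        exact keyA z' hz'U hz'Υ h5 (by linarith)
    · -- x₀ ∉ Υ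
      have hx₀Ω : x₀ ∈ Ω := hUΩ hx₀cl
      have h1 : g x₀ = u x₀ := hgΥ' x₀ hx₀Υ
      have h4 : u x₀ ∉ Set.Ioo t₁ t₂ := hnotIoo x₀ hx₀Ω hx₀Υ
      have h5 : t₂ ≤ u x₀ := by
        by_contra h
        push_neg at h
        exact h4 ⟨by linarith, h⟩
      exact keyA x₀ hx₀cl hx₀Υ h5 (le_of_eq h1)

/-- Gluing Lemma: gluing a monotone function `v` on the level region
`Υ = u⁻¹((t₁,t₂))` with `u` outside yields a continuous monotone function on `Ω`. -/
theorem lebMonotoneOn_glue_level_region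
    (Ω : Set (EuclideanSpace ℝ (Fin 2))) (hΩ : IsOpen Ω)
    (u v : EuclideanSpace ℝ (Fin 2) → ℝ)
    (hu : ContinuousOn u Ω) (humono : LebMonotoneOn Ω u)
    (t₁ t₂ : ℝ) (ht : t₁ < t₂)
    (Υ : Set (EuclideanSpace ℝ (Fin 2))) (hΥ : Υ = {x ∈ Ω | u x ∈ Set.Ioo t₁ t₂})
    (hvmono : LebMonotoneOn Υ v)
    (hvext : ContinuousOn (fun x => if x ∈ Υ then v x else u x) (Υ ∪ (frontier Υ ∩ Ω)))
    (hvbd : ∀ x ∈ Υ, t₁ ≤ v x ∧ v x ≤ t₂) :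
    ContinuousOn (fun x => if x ∈ Υ then v x else u x) Ω ∧
      LebMonotoneOn Ω (fun x => if x ∈ Υ then v x else u x) := by
  refine ⟨glue_cont Ω hΩ u v hu t₁ t₂ Υ hΥ hvext, ?_⟩
  intro U hUo hUne hUc hUΩ
  constructor
  · exact glue_max Ω hΩ u v hu humono t₁ t₂ ht Υ hΥ hvmono hvext hvbd U hUo hUne hUc hUΩ
  · -- min part via negation
    have hΥ' : Υ = {x ∈ Ω | (fun x => -(u x)) x ∈ Set.Ioo (-t₂) (-t₁)} := by
      rw [hΥ]
      ext x
      simp only [Set.mem_setOf_eq, Set.mem_Ioo]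
      constructor
      · rintro ⟨h1, h2, h3⟩; exact ⟨h1, by linarith, by linarith⟩
      · rintro ⟨h1, h2, h3⟩; exact ⟨h1, by linarith, by linarith⟩
    have hfun : (fun x => if x ∈ Υ then -(v x) else -(u x)) =
        fun x => -((fun x => if x ∈ Υ then v x else u x) x) := by
      funext x
      by_cases h : x ∈ Υ <;> simp [h]
    have humono' : LebMonotoneOn Ω (fun x => -(u x)) := by
      intro V hVo hVne hVc hVΩ
      obtain ⟨⟨a, ha, hamax⟩, ⟨b, hb, hbmin⟩⟩ := humono V hVo hVne hVc hVΩ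
      exact ⟨⟨b, hb, fun y hy => neg_le_neg (hbmin y hy)⟩,
             ⟨a, ha, fun y hy => neg_le_neg (hamax y hy)⟩⟩
    have hvmono' : LebMonotoneOn Υ (fun x => -(v x)) := by
      intro V hVo hVne hVc hVΥ
      obtain ⟨⟨a, ha, hamax⟩, ⟨b, hb, hbmin⟩⟩ := hvmono V hVo hVne hVc hVΥ
      exact ⟨⟨b, hb, fun y hy => neg_le_neg (hbmin y hy)⟩,
             ⟨a, ha, fun y hy => neg_le_neg (hamax y hy)⟩⟩
    have hvext' : ContinuousOn (fun x => if x ∈ Υ then -(v x) else -(u x))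
        (Υ ∪ (frontier Υ ∩ Ω)) := by
      rw [hfun]
      exact hvext.neg
    have hvbd' : ∀ x ∈ Υ, -t₂ ≤ -(v x) ∧ -(v x) ≤ -t₁ := by
      intro x hx
      obtain ⟨h1, h2⟩ := hvbd x hx
      exact ⟨by linarith, by linarith⟩
    obtain ⟨x, hxF, hxmax⟩ := glue_max Ω hΩ (fun x => -(u x)) (fun x => -(v x))
      hu.neg humono' (-t₂) (-t₁) (by linarith) Υ hΥ' hvmono' hvext' hvbd'
      U hUo hUne hUc hUΩ
    refine ⟨x, hxF, fun y hy => ?_⟩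
    have h := hxmax y hy
    have hx' := congrFun hfun x
    have hy' := congrFun hfun y
    simp only at hx' hy'
    rw [hx', hy'] at h
    simpa using h
end

section
/- Let F be a connected component of a compact set A in ℝ². Then for every open set U ⊇ F there exists an open set V with F ⊆ V, cl(V) compact and contained in U, and ∂V ∩ A = ∅. -/
/-!
In a compact Hausdorff space the component of a point is the intersection of its clopen
neighbourhoods, so by compactness a single clopen piece `K` of `A` contains `F` and lies in `U`.
Then `K` and `A \ K` are disjoint compact sets, and any open `V ⊇ K` with compact closure inside
`U \ (A \ K)` has its frontier outside `V ⊇ K` and outside `A \ K`, hence outside `A`.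
-/

open Set Topology

theorem exists_isClopen_subset_of_connectedComponent_subset {X : Type*} [TopologicalSpace X]
    [T2Space X] [CompactSpace X] {x : X} {U : Set X} (hU : IsOpen U)
    (h : connectedComponent x ⊆ U) : ∃ Z : Set X, IsClopen Z ∧ x ∈ Z ∧ Z ⊆ U := by
  let ClopenNhd := {s : Set X // IsClopen s ∧ x ∈ s}
  have : Nonempty ClopenNhd := ⟨⟨univ, isClopen_univ, mem_univ x⟩⟩
  have hdir : Directed (· ⊇ ·) fun s : ClopenNhd ↦ (s : Set X) := fun s t ↦
    ⟨⟨s ∩ t, s.2.1.inter t.2.1, s.2.2, t.2.2⟩, inter_subset_left, inter_subset_right⟩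
  have hnhds : ∀ y ∈ ⋂ s : ClopenNhd, (s : Set X), U ∈ 𝓝 y := by
    rw [← connectedComponent_eq_iInter_isClopen]
    exact fun y hy ↦ hU.mem_nhds (h hy)
  obtain ⟨⟨Z, hZ, hxZ⟩, hZU⟩ := exists_subset_nhds_of_compactSpace hdir (fun s ↦ s.2.1.isClosed)
    hnhds
  exact ⟨Z, hZ, hxZ, hZU⟩

theorem IsCompact.exists_isCompact_split_of_connectedComponentIn_subset {X : Type*}
    [TopologicalSpace X] [T2Space X] {A : Set X} (hA : IsCompact A) {x : X} (hx : x ∈ A)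
    {U : Set X} (hU : IsOpen U) (hAU : connectedComponentIn A x ⊆ U) :
    ∃ K : Set X, IsCompact K ∧ IsCompact (A \ K) ∧ connectedComponentIn A x ⊆ K ∧ K ⊆ U := by
  have : CompactSpace A := isCompact_iff_compactSpace.1 hA
  rw [connectedComponentIn_eq_image hx] at hAU ⊢
  obtain ⟨Z, hZ, hxZ, hZU⟩ := exists_isClopen_subset_of_connectedComponent_subset
    (hU.preimage continuous_subtype_val) (image_subset_iff.1 hAU)
  refine ⟨(↑) '' Z, hZ.isClosed.isCompact.image continuous_subtype_val, ?_,
    image_mono (hZ.connectedComponent_subset hxZ), image_subset_iff.2 hZU⟩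
  rw [← image_val_compl]
  exact hZ.compl.isClosed.isCompact.image continuous_subtype_val

/-- if `F` is a connected component of a compact set `A ⊆ ℝ²`, then for
every open `U ⊇ F` there is an open set `V` with `F ⊆ V ⊂⊂ U` and `∂V ∩ A = ∅`. -/
theorem component_separation (A : Set (EuclideanSpace ℝ (Fin 2))) (hA : IsCompact A)
    (F : Set (EuclideanSpace ℝ (Fin 2))) (x : EuclideanSpace ℝ (Fin 2)) (hx : x ∈ A)
    (hF : F = connectedComponentIn A x)
    (U : Set (EuclideanSpace ℝ (Fin 2))) (hU : IsOpen U) (hFU : F ⊆ U) :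
    ∃ V : Set (EuclideanSpace ℝ (Fin 2)), IsOpen V ∧ F ⊆ V ∧
      IsCompact (closure V) ∧ closure V ⊆ U ∧ frontier V ∩ A = ∅ := by
  subst hF
  obtain ⟨K, hK, hAK, hFK, hKU⟩ :=
    hA.exists_isCompact_split_of_connectedComponentIn_subset hx hU hFU
  obtain ⟨V, hV, hKV, hVU, hVc⟩ := exists_open_between_and_isCompact_closure hK
    (hU.inter hAK.isClosed.isOpen_compl) (subset_inter hKU fun y hyK hyAK ↦ hyAK.2 hyK)
  refine ⟨V, hV, hFK.trans hKV, hVc, hVU.trans inter_subset_left, ?_⟩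
  refine eq_empty_of_forall_notMem fun y ⟨hyV, hyA⟩ ↦ ?_
  rw [hV.frontier_eq] at hyV
  exact (hVU hyV.1).2 ⟨hyA, fun hyK ↦ hyV.2 (hKV hyK)⟩
end

section
/- Let E be a connected subset of a metric space containing at least two points. Then the Hausdorff 1-measure of E is at least the diameter of E. -/
open Set Metric MeasureTheory

/-- a connected set with at least two points in a metric space has
Hausdorff 1-measure at least its diameter. -/
theorem diam_le_hausdorffMeasure_one {X : Type*} [MetricSpace X]
    [MeasurableSpace X] [BorelSpace X]
    (E : Set X) (hconn : IsConnected E) (hnt : E.Nontrivial) :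
    EMetric.diam E ≤ (MeasureTheory.Measure.hausdorffMeasure 1 : Measure X) E := by
  apply EMetric.diam_le
  intro x hx y hy
  set f : X → ℝ := dist x
  have hf : LipschitzWith 1 f := LipschitzWith.dist_right x
  have himg : IsConnected (f '' E) := hconn.image f hf.continuous.continuousOn
  have hsub : Icc (0 : ℝ) (dist x y) ⊆ f '' E := by
    have := himg.isPreconnected.ordConnected
    exact this.out ⟨x, hx, dist_self x⟩ ⟨y, hy, rfl⟩
  calc edist x y = volume (Icc (0 : ℝ) (dist x y)) := by
        rw [Real.volume_Icc, sub_zero, edist_dist]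
    _ ≤ volume (f '' E) := measure_mono hsub
    _ = μH[1] (f '' E) := by rw [hausdorffMeasure_real]
    _ ≤ 1 ^ (1 : ℝ) * μH[1] E := hf.hausdorffMeasure_image_le zero_le_one E
    _ = μH[1] E := by simp
end
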